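/- arXiv:2006.01756 — 2 statements merged into one kernel-verified Lean document; each statement's English description precedes it below -/
import Mathlib

section
/- Let r and s be coprime nonzero integers with r²+4s ≠ 0, let α, β be the roots of λ² − rλ − s = 0 labeled so that |α| ≥ |β|, assume α/β is not a root of unity, and set x = β/α. Let V_n be the companion Lucas sequence of parameters (r,s). Let p > 2 be an odd prime, let h > 0 and t ≥ 0 be integers, set n₀ = p^h, and assume n₀ > 4 and that n₀·p^t divides n, where n ≥ 1. Then M_{n₀}(V_n) ≥ n(1 − 1/p^{t+1})·log|α| + log|1 + xⁿ| − log|1 + x^{n/p^{t+1}}| − (t+1)·log p. -/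
/-!
Write `n = m p^(t+1)` with `p^(h-1) ∣ m`, and `V_n = w V_m`. Let `q ≠ p` be a prime factor of `w`.
If `q ∣ V_m`, then `q ∣ p^(t+1)` or `q ∣ s`, because `(α^m, β^m)` has parameters
`(V_m, -(-s)^m)` and so `w ≡ p^(t+1) (-(-s)^m)^((p^(t+1)-1)/2) (mod V_m)`; both are impossible
(`V_m` is prime to `s`). Otherwise `α/β` has an order in `𝔽_q(α)` that divides `q ∓ 1`
(Frobenius fixes or swaps `α` and `β`), divides `2n` and not `2m`, hence is divisible by
`p^h = n₀`. Lifting the exponent bounds the power of `p` in `w` by `p^(t+1)`. So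
`log|w| ≤ M_{n₀}(V_n) + (t+1) log p`, and `|V_k| = |α|^k |1 + x^k|` gives the claim.
-/

open scoped BigOperators

/-- `Mlog n₀ ℓ` is the logarithm of the largest divisor of `|ℓ|` composed only of
primes congruent to `±1` modulo `n₀`. -/
noncomputable def Mlog (n₀ : ℕ) (ℓ : ℤ) : ℝ :=
  ∑ p ∈ ℓ.natAbs.primeFactors,
    if (n₀ : ℤ) ∣ ((p : ℤ) - 1) ∨ (n₀ : ℤ) ∣ ((p : ℤ) + 1) then
      (ℓ.natAbs.factorization p : ℝ) * Real.log p
    else 0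

open Polynomial in
theorem exists_add_eq_and_mul_eq_neg {K : Type*} [Field K] [IsAlgClosed K] (r s : K) :
    ∃ a b : K, a + b = r ∧ a * b = -s := by
  obtain ⟨a, ha⟩ := IsAlgClosed.exists_root (C 1 * X ^ 2 + C (-r) * X + C (-s))
    (by rw [degree_quadratic one_ne_zero]; decide)
  refine ⟨a, r - a, by ring, ?_⟩
  simp only [IsRoot, eval_add, eval_mul, eval_C, eval_pow, eval_X] at ha
  linear_combination -ha

section CharP

variable {K : Type*} [Field K] (q : ℕ) [Fact q.Prime] [CharP K q]

theorem intCast_pow_char (r : ℤ) : (r : K) ^ q = r := by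
  rw [← frobenius_def, map_intCast]

theorem pow_char_eq_or_eq_swap {a b : K} {r c : ℤ} (hsum : a + b = r) (hprod : a * b = c) :
    (a ^ q = a ∧ b ^ q = b) ∨ (a ^ q = b ∧ b ^ q = a) := by
  have hsum' : a ^ q + b ^ q = r := by
    rw [← add_pow_char, hsum, intCast_pow_char]
  have hprod' : a ^ q * b ^ q = c := by
    rw [← mul_pow, hprod, intCast_pow_char]
  have hroot : (a ^ q - a) * (a ^ q - b) = 0 := by
    linear_combination a ^ q * hsum' - hprod' - a ^ q * hsum + hprod
  rcases mul_eq_zero.1 hroot with h | h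
  · left
    refine ⟨sub_eq_zero.1 h, ?_⟩
    linear_combination hsum' - hsum - h
  · right
    refine ⟨sub_eq_zero.1 h, ?_⟩
    linear_combination hsum' - hsum - h

theorem orderOf_div_dvd_sub_one_or_dvd_add_one {a b : K} {r c : ℤ} (hsum : a + b = r)
    (hprod : a * b = c) (ha : a ≠ 0) (hb : b ≠ 0) :
    orderOf (a / b) ∣ q - 1 ∨ orderOf (a / b) ∣ q + 1 := by
  have hg : a / b ≠ 0 := div_ne_zero ha hb
  rcases pow_char_eq_or_eq_swap q hsum hprod with ⟨hqa, hqb⟩ | ⟨hqa, hqb⟩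
  · refine .inl (orderOf_dvd_of_pow_eq_one ?_)
    rw [pow_sub₀ _ hg (Fact.out : q.Prime).one_le, div_pow, hqa, hqb, pow_one, mul_inv_cancel₀ hg]
  · refine .inr (orderOf_dvd_of_pow_eq_one ?_)
    rw [pow_succ, div_pow, hqa, hqb]
    field_simp

end CharP

theorem orderOf_dvd_two_mul_and_not_dvd_two_mul {K : Type*} [Field K] {g : K} {m n : ℕ}
    (hmn : m ∣ n) (hn : g ^ n = -1) (hm : g ^ m ≠ -1) :
    orderOf g ∣ 2 * n ∧ ¬orderOf g ∣ 2 * m := by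
  refine ⟨orderOf_dvd_of_pow_eq_one (by rw [pow_mul', hn]; norm_num), fun h => ?_⟩
  have hsq : (g ^ m) ^ 2 = 1 := by rw [← pow_mul', orderOf_dvd_iff_pow_eq_one.1 h]
  rcases sq_eq_one_iff.1 hsq with h1 | h1
  · obtain ⟨k, rfl⟩ := hmn
    -- `g ^ m = 1` forces `-1 = 1`, so `g ^ m = -1` after all
    have : (-1 : K) = 1 := by rw [← hn, pow_mul, h1, one_pow]
    exact hm (h1.trans this.symm)
  · exact hm h1

theorem Nat.pow_succ_dvd_of_dvd_mul_pow {p ρ c e k : ℕ} (hp : p.Prime) (hρ : ρ ∣ c * p ^ k)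
    (hρc : ¬ρ ∣ c) (hc : p ^ e ∣ c) : p ^ (e + 1) ∣ ρ := by
  by_contra hcon
  have hρ0 : ρ ≠ 0 := by
    rintro rfl
    rw [zero_dvd_iff, mul_eq_zero] at hρ
    exact hρc (by simpa [hp.ne_zero] using hρ)
  have hle : ρ.factorization p ≤ e := by
    have := (hp.pow_dvd_iff_le_factorization hρ0).not.1 hcon
    omega
  have hcop : Nat.Coprime p (ρ / p ^ ρ.factorization p) :=
    hp.coprime_iff_not_dvd.2 (Nat.not_dvd_ordCompl hp hρ0)
  apply hρc
  rw [← Nat.ordProj_mul_ordCompl_eq_self ρ p]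
  exact (hcop.pow_left _).mul_dvd_of_dvd_of_dvd ((pow_dvd_pow p hle).trans hc)
    ((hcop.pow_left k).symm.dvd_of_dvd_mul_right ((Nat.ordCompl_dvd ρ p).trans hρ))

theorem Mlog_le_Mlog_of_dvd (n₀ : ℕ) {a b : ℤ} (hab : a ∣ b) (hb : b ≠ 0) :
    Mlog n₀ a ≤ Mlog n₀ b := by
  have ha : a.natAbs ≠ 0 := by rintro h; exact hb (zero_dvd_iff.1 (Int.natAbs_eq_zero.1 h ▸ hab))
  have hb' : b.natAbs ≠ 0 := Int.natAbs_ne_zero.2 hb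
  have hab' : a.natAbs ∣ b.natAbs := Int.natAbs_dvd_natAbs.2 hab
  unfold Mlog
  calc _ ≤ ∑ q ∈ a.natAbs.primeFactors,
        if (n₀ : ℤ) ∣ (q : ℤ) - 1 ∨ (n₀ : ℤ) ∣ (q : ℤ) + 1 then
          (b.natAbs.factorization q : ℝ) * Real.log q else 0 := by
        refine Finset.sum_le_sum fun q _ => ?_
        split_ifs
        · gcongr
          exact (Nat.factorization_le_iff_dvd ha hb').2 hab' q
        · exact le_rfl
    _ ≤ _ := by
        refine Finset.sum_le_sum_of_subset_of_nonneg (Nat.primeFactors_mono hab' hb') fun q _ _ => ?_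
        split_ifs
        · exact mul_nonneg (Nat.cast_nonneg _) (Real.log_natCast_nonneg q)
        · exact le_rfl

theorem log_abs_le_Mlog_add (n₀ : ℕ) {w : ℤ} (hw : w ≠ 0) {p k : ℕ} (hp : p.Prime)
    (hgood : ∀ q : ℕ, q.Prime → (q : ℤ) ∣ w →
      q = p ∨ (n₀ : ℤ) ∣ (q : ℤ) - 1 ∨ (n₀ : ℤ) ∣ (q : ℤ) + 1)
    (hpw : ¬(p : ℤ) ^ (k + 1) ∣ w) :
    Real.log |(w : ℝ)| ≤ Mlog n₀ w + k * Real.log p := by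
  have hw' : w.natAbs ≠ 0 := Int.natAbs_ne_zero.2 hw
  set f := w.natAbs.factorization
  have hfp : (f p : ℝ) ≤ k := by
    have : ¬k + 1 ≤ f p := fun h =>
      hpw (Int.natCast_dvd.2 (by exact_mod_cast (hp.pow_dvd_iff_le_factorization hw').2 h))
    exact_mod_cast (by omega : f p ≤ k)
  have hlog : Real.log |(w : ℝ)| = ∑ q ∈ w.natAbs.primeFactors, (f q : ℝ) * Real.log q := by
    rw [← Int.cast_abs, ← Int.natCast_natAbs, Int.cast_natCast, Real.log_nat_eq_sum_factorization,
      Finsupp.sum, Nat.support_factorization]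
  rw [hlog, Mlog]
  calc _ ≤ ∑ q ∈ w.natAbs.primeFactors,
        ((if (n₀ : ℤ) ∣ (q : ℤ) - 1 ∨ (n₀ : ℤ) ∣ (q : ℤ) + 1 then (f q : ℝ) * Real.log q else 0)
          + if q = p then (f q : ℝ) * Real.log q else 0) := by
        refine Finset.sum_le_sum fun q hq => ?_
        have hterm : 0 ≤ (f q : ℝ) * Real.log q :=
          mul_nonneg (Nat.cast_nonneg _) (Real.log_natCast_nonneg q)
        rcases hgood q (Nat.prime_of_mem_primeFactors hq)
          (Int.natCast_dvd.2 (Nat.dvd_of_mem_primeFactors hq)) with rfl | hgq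
        · rw [if_pos rfl]
          split_ifs <;> linarith
        · rw [if_pos hgq]
          split_ifs <;> linarith
    _ ≤ _ := by
        rw [Finset.sum_add_distrib, Finset.sum_ite_eq']
        gcongr
        split_ifs
        · exact mul_le_mul_of_nonneg_right hfp (Real.log_natCast_nonneg p)
        · exact mul_nonneg (Nat.cast_nonneg _) (Real.log_natCast_nonneg p)

structure IsLucasV (P Q : ℤ) (W : ℕ → ℤ) : Prop where
  zero : W 0 = 2
  one : W 1 = P
  add_two : ∀ j, W (j + 2) = P * W (j + 1) + Q * W j

namespace IsLucasV

variable {P Q : ℤ} {W : ℕ → ℤ}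

theorem eq_pow_add_pow (hW : IsLucasV P Q W) {R : Type*} [CommRing R] {a b : R}
    (hsum : a + b = P) (hprod : a * b = -Q) (k : ℕ) : (W k : R) = a ^ k + b ^ k := by
  induction k using Nat.strong_induction_on with
  | _ k ih =>
    match k with
    | 0 => rw [hW.zero]; norm_num
    | 1 => rw [hW.one, ← hsum]; ring
    | j + 2 =>
      rw [hW.add_two, Int.cast_add, Int.cast_mul, Int.cast_mul, ih (j + 1) (by omega),
        ih j (by omega), ← hsum]
      linear_combination (a ^ j + b ^ j) * hprod

/-- If `α, β` are the roots for `W`, then `α ^ m + β ^ m = W m` and `α ^ m β ^ m = (-Q) ^ m`. -/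
theorem comp_mul (hW : IsLucasV P Q W) (m : ℕ) :
    IsLucasV (W m) (-(-Q) ^ m) (fun k => W (m * k)) := by
  obtain ⟨a, b, hsum, hprod⟩ := exists_add_eq_and_mul_eq_neg (P : ℂ) Q
  have hab := hW.eq_pow_add_pow hsum hprod
  refine ⟨by simpa using hW.zero, by simp, fun j => Int.cast_injective (α := ℂ) ?_⟩
  push_cast
  simp only [hab, ← hprod]
  ring

theorem sq_dvd_sub_and_cube_dvd_sub (hW : IsLucasV P Q W) (j : ℕ) :
    P ^ 2 ∣ W (2 * j) - 2 * Q ^ j ∧ P ^ 3 ∣ W (2 * j + 1) - (2 * j + 1) * Q ^ j * P := by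
  induction j with
  | zero => simp [hW.zero, hW.one]
  | succ j ih =>
    obtain ⟨⟨d, hd⟩, ⟨b, hb⟩⟩ := ih
    have heven : W (2 * (j + 1)) - 2 * Q ^ (j + 1) =
        P ^ 2 * ((2 * j + 1) * Q ^ j + P ^ 2 * b + Q * d) := by
      linear_combination hW.add_two (2 * j) + P * hb + Q * hd
    refine ⟨⟨_, heven⟩, ⟨(2 * j + 1) * Q ^ j + P ^ 2 * b + Q * d + Q * b, ?_⟩⟩
    push_cast
    linear_combination hW.add_two (2 * j + 1) + P * heven + Q * hb

theorem cube_dvd_sub_of_odd (hW : IsLucasV P Q W) {c : ℕ} (hc : Odd c) :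
    P ^ 3 ∣ W c - c * Q ^ (c / 2) * P := by
  obtain ⟨j, rfl⟩ := hc
  have hj : (2 * j + 1) / 2 = j := by omega
  simpa [hj] using (hW.sq_dvd_sub_and_cube_dvd_sub j).2

theorem dvd_mul_of_odd (hW : IsLucasV P Q W) (m : ℕ) {c : ℕ} (hc : Odd c) :
    W m ∣ W (m * c) := by
  obtain ⟨b, hb⟩ := (hW.comp_mul m).cube_dvd_sub_of_odd hc
  exact ⟨c * (-(-Q) ^ m) ^ (c / 2) + W m ^ 2 * b, by linear_combination hb⟩

theorem dvd_sub_pow (hW : IsLucasV P Q W) (k : ℕ) : Q ∣ W (k + 1) - P ^ (k + 1) := by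
  induction k with
  | zero => simp [hW.one]
  | succ k ih =>
    obtain ⟨u, hu⟩ := ih
    exact ⟨P * u + W k, by linear_combination hW.add_two k + P * hu⟩

theorem isCoprime_right (hW : IsLucasV P Q W) (hPQ : IsCoprime P Q) {k : ℕ} (hk : k ≠ 0) :
    IsCoprime (W k) Q := by
  obtain ⟨k, rfl⟩ := Nat.exists_eq_add_one_of_ne_zero hk
  obtain ⟨u, hu⟩ := hW.dvd_sub_pow k
  rw [show W (k + 1) = P ^ (k + 1) + u * Q by linear_combination hu]
  exact hPQ.pow_left.add_mul_right_left u

theorem not_dvd_right_of_dvd (hW : IsLucasV P Q W) (hPQ : IsCoprime P Q) {k : ℕ} (hk : k ≠ 0)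
    {q : ℕ} (hq : q.Prime) (hqW : (q : ℤ) ∣ W k) : ¬(q : ℤ) ∣ Q := fun hqQ =>
  (Nat.prime_iff_prime_int.mp hq).not_isUnit ((hW.isCoprime_right hPQ hk).isUnit_of_dvd' hqW hqQ)

/-- The rank of apparition of `q`, the order of `α / β` in `𝔽_q(α)`, divides `q ∓ 1` and is
divisible by `p ^ (e + 1)`. -/
theorem pow_succ_dvd_sub_one_or_add_one (hW : IsLucasV P Q W) {p q m k e : ℕ} (hp : p.Prime)
    (hq : q.Prime) (hqQ : ¬(q : ℤ) ∣ Q) (hqn : (q : ℤ) ∣ W (m * p ^ k)) (hqm : ¬(q : ℤ) ∣ W m)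
    (he : p ^ e ∣ m) :
    (p : ℤ) ^ (e + 1) ∣ (q : ℤ) - 1 ∨ (p : ℤ) ^ (e + 1) ∣ (q : ℤ) + 1 := by
  have := Fact.mk hq
  set K := AlgebraicClosure (ZMod q)
  obtain ⟨a, b, hsum, hprod⟩ := exists_add_eq_and_mul_eq_neg (P : K) Q
  have hQ : (Q : K) ≠ 0 := mt (CharP.intCast_eq_zero_iff K q Q).1 hqQ
  have ha : a ≠ 0 := by rintro rfl; exact hQ (by simpa using hprod)
  have hb : b ≠ 0 := by rintro rfl; exact hQ (by simpa using hprod)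
  have hvanish : ∀ j, (q : ℤ) ∣ W j ↔ (a / b) ^ j = -1 := fun j => by
    rw [← CharP.intCast_eq_zero_iff K q, hW.eq_pow_add_pow hsum hprod, div_pow,
      div_eq_iff (pow_ne_zero _ hb), neg_one_mul, eq_neg_iff_add_eq_zero]
  obtain ⟨hn, hm⟩ := orderOf_dvd_two_mul_and_not_dvd_two_mul (dvd_mul_right m (p ^ k))
    ((hvanish _).1 hqn) (mt (hvanish _).2 hqm)
  have hpe : p ^ (e + 1) ∣ orderOf (a / b) :=
    Nat.pow_succ_dvd_of_dvd_mul_pow hp (by rwa [← mul_assoc] at hn) hm (he.mul_left 2)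
  rcases orderOf_div_dvd_sub_one_or_dvd_add_one q (c := -Q) hsum (by push_cast; exact hprod)
    ha hb with h | h
  · left
    have := Int.natCast_dvd_natCast.2 (hpe.trans h)
    push_cast [hq.one_le] at this
    exact this
  · right
    exact_mod_cast hpe.trans h

theorem exists_eq_mul_mul_of_dvd {p : ℕ} (hW : IsLucasV P Q W) (hp : p.Prime) (hp2 : p ≠ 2)
    (hpP : (p : ℤ) ∣ P) (hpQ : ¬(p : ℤ) ∣ Q) :
    ∃ u : ℤ, W p = p * u * P ∧ ¬(p : ℤ) ∣ u := by
  obtain ⟨b, hb⟩ := hW.cube_dvd_sub_of_odd (hp.odd_of_ne_two hp2)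
  obtain ⟨P', rfl⟩ := hpP
  refine ⟨Q ^ (p / 2) + p * P' ^ 2 * b, by linear_combination hb, fun hu => hpQ ?_⟩
  have hpZ := Nat.prime_iff_prime_int.mp hp
  exact hpZ.dvd_of_dvd_pow ((dvd_add_left (dvd_mul_of_dvd_left (dvd_mul_right _ _) b)).1 hu)

/-- Lifting the exponent, one factor of `p` at a time, through `k ↦ W (m * p ^ j * k)`. -/
theorem exists_eq_mul_not_pow_succ_dvd {p : ℕ} (hW : IsLucasV P Q W) (hp : p.Prime)
    (hp2 : p ≠ 2) (hpQ : ¬(p : ℤ) ∣ Q) {m : ℕ} (hpm : (p : ℤ) ∣ W m) (j : ℕ) :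
    ∃ w : ℤ, W (m * p ^ j) = w * W m ∧ ¬(p : ℤ) ^ (j + 1) ∣ w := by
  have hpZ := Nat.prime_iff_prime_int.mp hp
  induction j with
  | zero => exact ⟨1, by simp, by simpa using hpZ.not_dvd_one⟩
  | succ j ih =>
    obtain ⟨w, hw, hpw⟩ := ih
    have hpQ' : ¬(p : ℤ) ∣ -(-Q) ^ (m * p ^ j) := by
      rw [dvd_neg]
      exact fun h => hpQ (dvd_neg.1 (hpZ.dvd_of_dvd_pow h))
    obtain ⟨u, hu, hpu⟩ := (hW.comp_mul (m * p ^ j)).exists_eq_mul_mul_of_dvd hp hp2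
      (by rw [hw]; exact hpm.mul_left w) hpQ'
    refine ⟨p * u * w, by rw [pow_succ, ← mul_assoc, hu, hw]; ring, fun h => ?_⟩
    rw [pow_succ', mul_assoc] at h
    have := Int.dvd_of_mul_dvd_mul_left (by exact_mod_cast hp.ne_zero) h
    exact hpw (hpZ.pow_dvd_of_dvd_mul_left _ hpu this)

theorem eq_or_pow_succ_dvd_of_prime_dvd_ratio (hW : IsLucasV P Q W) (hPQ : IsCoprime P Q)
    {p q m k e : ℕ} (hp : p.Prime) (hp2 : p ≠ 2) (hq : q.Prime) (hm : m ≠ 0) (he : p ^ e ∣ m)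
    (hWm : W m ≠ 0) {w : ℤ} (hw : W (m * p ^ k) = w * W m) (hqw : (q : ℤ) ∣ w) :
    q = p ∨ (p : ℤ) ^ (e + 1) ∣ (q : ℤ) - 1 ∨ (p : ℤ) ^ (e + 1) ∣ (q : ℤ) + 1 := by
  have hqZ := Nat.prime_iff_prime_int.mp hq
  by_cases hqm : (q : ℤ) ∣ W m
  · left
    obtain ⟨b, hb⟩ := (hW.comp_mul m).cube_dvd_sub_of_odd (c := p ^ k) (hp.odd_of_ne_two hp2).pow
    have hw' : w = p ^ k * (-(-Q) ^ m) ^ (p ^ k / 2) + W m ^ 2 * b := by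
      apply mul_right_cancel₀ hWm
      push_cast at hb
      linear_combination hb - hw
    rw [hw'] at hqw
    rcases hqZ.dvd_or_dvd ((dvd_add_left (dvd_mul_of_dvd_left (dvd_pow hqm two_ne_zero) b)).1 hqw)
      with hqp | hqQ
    · exact (Nat.prime_dvd_prime_iff_eq hq hp).1 (Int.natCast_dvd_natCast.1 (hqZ.dvd_of_dvd_pow hqp))
    · have := dvd_neg.1 (hqZ.dvd_of_dvd_pow (dvd_neg.1 (hqZ.dvd_of_dvd_pow hqQ)))
      exact absurd this (hW.not_dvd_right_of_dvd hPQ hm hq hqm)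
  · right
    have hqn : (q : ℤ) ∣ W (m * p ^ k) := hw ▸ hqw.mul_right _
    exact hW.pow_succ_dvd_sub_one_or_add_one hp hq
      (hW.not_dvd_right_of_dvd hPQ (by simp [hm, hp.ne_zero]) hq hqn) hqn hqm he

theorem not_pow_succ_dvd_ratio (hW : IsLucasV P Q W) (hPQ : IsCoprime P Q) {p m k : ℕ}
    (hp : p.Prime) (hp2 : p ≠ 2) (hm : m ≠ 0) (hWm : W m ≠ 0) {w : ℤ}
    (hw : W (m * p ^ k) = w * W m) : ¬(p : ℤ) ^ (k + 1) ∣ w := by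
  have hpZ := Nat.prime_iff_prime_int.mp hp
  by_cases hpm : (p : ℤ) ∣ W m
  · obtain ⟨w', hw', hpw'⟩ := hW.exists_eq_mul_not_pow_succ_dvd hp hp2
      (hW.not_dvd_right_of_dvd hPQ hm hp hpm) hpm k
    rwa [mul_right_cancel₀ hWm (hw.symm.trans hw')]
  · intro hpw
    have hpn : (p : ℤ) ∣ W (m * p ^ k) :=
      hw ▸ ((dvd_pow_self _ k.succ_ne_zero).trans hpw).mul_right _
    rcases hW.pow_succ_dvd_sub_one_or_add_one (e := 0) hp hp
      (hW.not_dvd_right_of_dvd hPQ (by simp [hm, hp.ne_zero]) hp hpn) hpn hpm (one_dvd m)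
      with h | h <;> rw [pow_one] at h
    · exact hpZ.not_dvd_one ((dvd_sub_right dvd_rfl).1 h)
    · exact hpZ.not_dvd_one ((dvd_add_right dvd_rfl).1 h)

theorem ne_zero (hW : IsLucasV P Q W) {K : Type*} [Field K] {a b : K} (hsum : a + b = P)
    (hprod : a * b = -Q) (hb : b ≠ 0) (hab : ∀ j : ℕ, 0 < j → (a / b) ^ j ≠ 1) {k : ℕ}
    (hk : k ≠ 0) : W k ≠ 0 := by
  intro h0
  have hk' : (a / b) ^ k = -1 := by
    have := hW.eq_pow_add_pow hsum hprod k
    rw [h0, Int.cast_zero] at this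
    rw [div_pow, div_eq_iff (pow_ne_zero _ hb)]
    linear_combination -this
  exact hab (2 * k) (by omega) (by rw [pow_mul', hk']; norm_num)

theorem log_abs_eq (hW : IsLucasV P Q W) {a b : ℂ} (hsum : a + b = P) (hprod : a * b = -Q)
    (ha : a ≠ 0) {k : ℕ} (hk : W k ≠ 0) :
    Real.log |(W k : ℝ)| = k * Real.log ‖a‖ + Real.log ‖1 + (b / a) ^ k‖ := by
  have hWk : (W k : ℂ) = a ^ k * (1 + (b / a) ^ k) := by
    rw [hW.eq_pow_add_pow hsum hprod, div_pow]
    field_simp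
  have hnorm : |(W k : ℝ)| = ‖a‖ ^ k * ‖1 + (b / a) ^ k‖ := by
    rw [← Complex.norm_intCast, hWk, norm_mul, norm_pow]
  have h1 : ‖1 + (b / a) ^ k‖ ≠ 0 :=
    norm_ne_zero_iff.2 (right_ne_zero_of_mul (hWk ▸ Int.cast_ne_zero.2 hk))
  rw [hnorm, Real.log_mul (by positivity) h1, Real.log_pow]

theorem log_abs_sub_le_Mlog (hW : IsLucasV P Q W) (hPQ : IsCoprime P Q) {p m e k : ℕ}
    (hp : p.Prime) (hp2 : p ≠ 2) (hm : m ≠ 0) (he : p ^ e ∣ m) (hWm : W m ≠ 0)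
    (hWn : W (m * p ^ k) ≠ 0) :
    Real.log |(W (m * p ^ k) : ℝ)| - Real.log |(W m : ℝ)| - k * Real.log p ≤
      Mlog (p ^ (e + 1)) (W (m * p ^ k)) := by
  obtain ⟨w, hw⟩ := hW.dvd_mul_of_odd m (c := p ^ k) (hp.odd_of_ne_two hp2).pow
  replace hw : W (m * p ^ k) = w * W m := hw.trans (mul_comm _ _)
  have hw0 : w ≠ 0 := left_ne_zero_of_mul (hw ▸ hWn)
  have hgood : ∀ q : ℕ, q.Prime → (q : ℤ) ∣ w →
      q = p ∨ ((p ^ (e + 1) : ℕ) : ℤ) ∣ (q : ℤ) - 1 ∨ ((p ^ (e + 1) : ℕ) : ℤ) ∣ (q : ℤ) + 1 :=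
    fun q hq hqw => by
      exact_mod_cast hW.eq_or_pow_succ_dvd_of_prime_dvd_ratio hPQ hp hp2 hq hm he hWm hw hqw
  have hlogw := log_abs_le_Mlog_add (p ^ (e + 1)) hw0 hp hgood
    (hW.not_pow_succ_dvd_ratio hPQ hp hp2 hm hWm hw)
  have hMlog := Mlog_le_Mlog_of_dvd (p ^ (e + 1)) (Dvd.intro _ hw.symm) hWn
  have hsplit : Real.log |(W (m * p ^ k) : ℝ)| = Real.log |(w : ℝ)| + Real.log |(W m : ℝ)| := by
    rw [hw, Int.cast_mul, abs_mul, Real.log_mul (by positivity) (by positivity)]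
  linarith

end IsLucasV

theorem stmt_9_general (r s : ℤ) (hs : s ≠ 0) (hco : IsCoprime r s)
    (α β : ℂ) (hsum : α + β = (r : ℂ)) (hprodroots : α * β = -(s : ℂ))
    (hnru : ∀ j : ℕ, 0 < j → (α / β) ^ j ≠ 1)
    (x : ℂ) (hx : x = β / α)
    (V : ℕ → ℤ) (hV0 : V 0 = 2) (hV1 : V 1 = r)
    (hVrec : ∀ j : ℕ, V (j + 2) = r * V (j + 1) + s * V j)
    (p : ℕ) (hp : p.Prime) (hpodd : 2 < p) (h t : ℕ) (hh : 0 < h)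
    (n₀ : ℕ) (hn₀ : n₀ = p ^ h)
    (n : ℕ) (hn : 1 ≤ n) (hdvd : n₀ * p ^ t ∣ n) :
    Mlog n₀ (V n) ≥
      (n : ℝ) * (1 - 1 / (p : ℝ) ^ (t + 1)) * Real.log ‖α‖
        + Real.log ‖1 + x ^ n‖
        - Real.log ‖1 + x ^ (n / p ^ (t + 1))‖
        - ((t : ℝ) + 1) * Real.log p := by
  subst hx hn₀
  have hV : IsLucasV r s V := ⟨hV0, hV1, hVrec⟩
  have hαβ : α * β ≠ 0 := by rw [hprodroots]; exact_mod_cast neg_ne_zero.2 hs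
  obtain ⟨e, rfl⟩ : ∃ e, h = e + 1 := ⟨h - 1, by omega⟩
  obtain ⟨k, rfl⟩ := hdvd
  have hm : p ^ e * k ≠ 0 := mul_ne_zero (pow_ne_zero _ hp.ne_zero) (by rintro rfl; simp at hn)
  rw [show p ^ (e + 1) * p ^ t * k = p ^ e * k * p ^ (t + 1) by ring,
    Nat.mul_div_cancel _ (pow_pos hp.pos _)]
  set m := p ^ e * k
  have hVne := fun {j} => hV.ne_zero (k := j) hsum hprodroots (right_ne_zero_of_mul hαβ) hnru
  have hVn := hVne (mul_ne_zero hm (pow_ne_zero (t + 1) hp.ne_zero))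
  have hkey := hV.log_abs_sub_le_Mlog hco hp hpodd.ne' hm (dvd_mul_right _ k) (hVne hm) hVn
  have hlogn := hV.log_abs_eq hsum hprodroots (left_ne_zero_of_mul hαβ) hVn
  have hlogm := hV.log_abs_eq hsum hprodroots (left_ne_zero_of_mul hαβ) (hVne hm)
  have hcoef : ((m * p ^ (t + 1) : ℕ) : ℝ) * (1 - 1 / (p : ℝ) ^ (t + 1)) =
      (m * p ^ (t + 1) : ℕ) - m := by
    have : (p : ℝ) ^ (t + 1) ≠ 0 := pow_ne_zero _ (Nat.cast_ne_zero.2 hp.ne_zero)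
    push_cast
    field_simp
  rw [hcoef]
  push_cast at hkey
  linarith

theorem stmt_9 (r s : ℤ) (hr : r ≠ 0) (hs : s ≠ 0) (hco : IsCoprime r s)
    (hdisc : r ^ 2 + 4 * s ≠ 0)
    (α β : ℂ) (hsum : α + β = (r : ℂ)) (hprodroots : α * β = -(s : ℂ))
    (habs : ‖β‖ ≤ ‖α‖)
    (hnru : ∀ j : ℕ, 0 < j → (α / β) ^ j ≠ 1)
    (x : ℂ) (hx : x = β / α)
    (V : ℕ → ℤ) (hV0 : V 0 = 2) (hV1 : V 1 = r)
    (hVrec : ∀ j : ℕ, V (j + 2) = r * V (j + 1) + s * V j)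
    (p : ℕ) (hp : p.Prime) (hpodd : 2 < p) (h t : ℕ) (hh : 0 < h)
    (n₀ : ℕ) (hn₀ : n₀ = p ^ h) (hn₀4 : 4 < n₀)
    (n : ℕ) (hn : 1 ≤ n) (hdvd : n₀ * p ^ t ∣ n) :
    Mlog n₀ (V n) ≥
      (n : ℝ) * (1 - 1 / (p : ℝ) ^ (t + 1)) * Real.log ‖α‖
        + Real.log ‖1 + x ^ n‖
        - Real.log ‖1 + x ^ (n / p ^ (t + 1))‖
        - ((t : ℝ) + 1) * Real.log p :=
  stmt_9_general r s hs hco α β hsum hprodroots hnru x hx V hV0 hV1 hVrec p hp hpodd h t hh n₀ hn₀ n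
    hn hdvd
end

section
/- The function m ↦ log(C_m/2)/m is strictly increasing for integers m ≥ 7, i.e., log(C_{m+1}/2)/(m+1) > log(C_m/2)/m for every integer m ≥ 7. Consequently, log(B_m/2) > log(C_m/2) > m for every integer m ≥ 14, log(B_m/2) > log(C_m/2) > 1.36·m for every integer m ≥ 400, and log(B_m/2) > log(C_m/2) > 1.38·m for every integer m ≥ 2100. -/
open Real

private lemma lemA' : ∀ n : ℕ, 1 ≤ n → (4:ℝ)^n ≤ 2 * Real.sqrt n * (Nat.centralBinom n : ℝ) := by
  intro n
  induction n with
  | zero => omega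
  | succ k ih =>
    intro _
    have hcast : ((k+1:ℕ):ℝ) = (k:ℝ)+1 := by push_cast; ring
    rcases Nat.eq_zero_or_pos k with hk | hk
    · subst hk
      norm_num [Nat.centralBinom, Real.sqrt_one]
    · have ihk := ih hk
      have hrec : ((k:ℝ)+1) * (Nat.centralBinom (k+1) : ℝ)
          = 2*(2*(k:ℝ)+1) * (Nat.centralBinom k : ℝ) := by
        have h := congrArg (Nat.cast : ℕ → ℝ) (Nat.succ_mul_centralBinom_succ k)
        push_cast at h
        linarith [h]
      have hs : (0:ℝ) < Real.sqrt k := Real.sqrt_pos.2 (by positivity)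
      have ht : (0:ℝ) < Real.sqrt ((k:ℝ)+1) := Real.sqrt_pos.2 (by positivity)
      have hb : (1:ℝ) ≤ (Nat.centralBinom k : ℝ) := by
        exact_mod_cast Nat.centralBinom_pos k
      have key : 2*((k:ℝ)+1) * Real.sqrt k ≤ (2*(k:ℝ)+1) * Real.sqrt ((k:ℝ)+1) := by
        have h1 : 2*((k:ℝ)+1) * Real.sqrt k = Real.sqrt ((2*((k:ℝ)+1))^2 * k) := by
          rw [Real.sqrt_mul (by positivity), Real.sqrt_sq (by positivity)]
        have h2 : (2*(k:ℝ)+1) * Real.sqrt ((k:ℝ)+1)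
            = Real.sqrt ((2*(k:ℝ)+1)^2 * ((k:ℝ)+1)) := by
          rw [Real.sqrt_mul (by positivity), Real.sqrt_sq (by positivity)]
        rw [h1, h2]
        apply Real.sqrt_le_sqrt
        nlinarith [sq_nonneg ((k:ℝ))]
      have hmain : ((k:ℝ)+1) * (4:ℝ)^(k+1)
          ≤ ((k:ℝ)+1) * (2 * Real.sqrt ((k:ℝ)+1) * (Nat.centralBinom (k+1) : ℝ)) := by
        have e1 : ((k:ℝ)+1) * (2 * Real.sqrt ((k:ℝ)+1) * (Nat.centralBinom (k+1) : ℝ))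
            = 2 * Real.sqrt ((k:ℝ)+1) * (2*(2*(k:ℝ)+1) * (Nat.centralBinom k : ℝ)) := by
          rw [← hrec]; ring
        rw [e1]
        have step1 : 2*((k:ℝ)+1)*Real.sqrt k * (Nat.centralBinom k : ℝ)
            ≤ (2*(k:ℝ)+1)*Real.sqrt ((k:ℝ)+1) * (Nat.centralBinom k : ℝ) :=
          mul_le_mul_of_nonneg_right key (by linarith)
        have step2 : ((k:ℝ)+1) * (4:ℝ)^k
            ≤ ((k:ℝ)+1) * (2 * Real.sqrt k * (Nat.centralBinom k : ℝ)) :=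
          mul_le_mul_of_nonneg_left ihk (by positivity)
        have e2 : (4:ℝ)^(k+1) = 4 * 4^k := by ring
        nlinarith [step1, step2]
      rw [hcast]
      exact le_of_mul_le_mul_left hmain (by positivity)

private lemma lemB' (m : ℕ) (hm : 1 ≤ m) :
    (4:ℝ)^m / (4 * Real.sqrt m * ((m:ℝ)+1)) ≤ (catalan m : ℝ) / 2 := by
  have h := lemA' m hm
  have hcc : ((m:ℝ)+1) * (catalan m : ℝ) = (Nat.centralBinom m : ℝ) := by
    have h2 := congrArg (Nat.cast : ℕ → ℝ) (succ_mul_catalan_eq_centralBinom m)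
    push_cast at h2
    linarith [h2]
  have hm1 : (1:ℝ) ≤ (m:ℝ) := by exact_mod_cast hm
  have hs : (0:ℝ) < Real.sqrt m := Real.sqrt_pos.2 (by positivity)
  rw [div_le_div_iff₀ (by positivity) (by positivity)]
  nlinarith [h, hcc]

private lemma cat_pos' (m : ℕ) : 0 < catalan m := by
  rcases Nat.eq_zero_or_pos (catalan m) with h | h
  · exfalso
    have h2 := succ_mul_catalan_eq_centralBinom m
    rw [h, Nat.mul_zero] at h2
    exact (Nat.centralBinom_pos m).ne' h2.symm
  · exact h

private lemma lemC' (m : ℕ) (hm : 1 ≤ m) :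
    (m:ℝ) * Real.log 4 - Real.log 4 - (1/2)*Real.log m - Real.log ((m:ℝ)+1)
      ≤ Real.log ((catalan m : ℝ)/2) := by
  have hm1 : (1:ℝ) ≤ (m:ℝ) := by exact_mod_cast hm
  have hs : (0:ℝ) < Real.sqrt m := Real.sqrt_pos.2 (by positivity)
  have hcp : (0:ℝ) < (catalan m : ℝ) := by exact_mod_cast cat_pos' m
  have h := Real.log_le_log (by positivity) (lemB' m hm)
  rw [Real.log_div (by positivity) (by positivity), Real.log_pow,
    Real.log_mul (by positivity) (by positivity),
    Real.log_mul (by positivity) (by positivity), Real.log_sqrt (by positivity)] at h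
  linarith [h]

private lemma tangent' (x a : ℝ) (hx : 0 < x) (ha : 0 < a) :
    Real.log x ≤ Real.log a + x/a - 1 := by
  have h := Real.log_le_sub_one_of_pos (show (0:ℝ) < x/a by positivity)
  rw [Real.log_div hx.ne' ha.ne'] at h
  linarith

private lemma lemD' (c : ℝ) (M : ℕ) (hM : 1 ≤ M)
    (hbase : Real.log 4 + (3/2)*Real.log ((M:ℝ)+1) + 1/((M:ℝ)+1) - 3/2
      < (M:ℝ)*(Real.log 4 - c - 3/(2*((M:ℝ)+1))))
    (hcoef : 0 < Real.log 4 - c - 3/(2*((M:ℝ)+1))) :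
    ∀ m : ℕ, M ≤ m → c * (m:ℝ) < Real.log ((catalan m : ℝ)/2) := by
  intro m hm
  have hm1 : 1 ≤ m := le_trans hM hm
  have hmr : (M:ℝ) ≤ (m:ℝ) := by exact_mod_cast hm
  have hm1r : (1:ℝ) ≤ (m:ℝ) := by exact_mod_cast hm1
  have hMp : (0:ℝ) < (M:ℝ)+1 := by positivity
  have t1 : Real.log (m:ℝ) ≤ Real.log ((M:ℝ)+1) + (m:ℝ)/((M:ℝ)+1) - 1 :=
    tangent' _ _ (by linarith) hMp
  have t2 : Real.log ((m:ℝ)+1) ≤ Real.log ((M:ℝ)+1) + ((m:ℝ)+1)/((M:ℝ)+1) - 1 :=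
    tangent' _ _ (by linarith) hMp
  have hC := lemC' m hm1
  have hmono : (M:ℝ) * (Real.log 4 - c - 3/(2*((M:ℝ)+1)))
      ≤ (m:ℝ) * (Real.log 4 - c - 3/(2*((M:ℝ)+1))) :=
    mul_le_mul_of_nonneg_right hmr hcoef.le
  have hexp : (m:ℝ)/((M:ℝ)+1) * (3/2) = (m:ℝ) * (3/(2*((M:ℝ)+1))) := by
    field_simp
  have hexp2 : ((m:ℝ)+1)/((M:ℝ)+1) = (m:ℝ)/((M:ℝ)+1) + 1/((M:ℝ)+1) := by ring
  have hexp3 : (m:ℝ)*(Real.log 4 - c - 3/(2*((M:ℝ)+1)))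
      = (m:ℝ)*Real.log 4 - c*(m:ℝ) - (m:ℝ)*(3/(2*((M:ℝ)+1))) := by ring
  linarith [hC, t1, t2, hmono]

private lemma log_le_two_sqrt' {x : ℝ} (hx : 0 < x) :
    Real.log x ≤ 2 * (Real.sqrt x - 1) := by
  have h1 : Real.log (Real.sqrt x) = Real.log x / 2 := Real.log_sqrt hx.le
  have h2 : Real.log (Real.sqrt x) ≤ Real.sqrt x - 1 :=
    Real.log_le_sub_one_of_pos (Real.sqrt_pos.2 hx)
  linarith

private lemma log4_eq' : Real.log 4 = 2 * Real.log 2 := by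
  rw [show (4:ℝ) = 2^2 by norm_num, Real.log_pow]
  push_cast; ring

private lemma log16_eq' : Real.log 16 = 4 * Real.log 2 := by
  rw [show (16:ℝ) = 2^4 by norm_num, Real.log_pow]
  push_cast; ring

private lemma log401_le' : Real.log 401 ≤ 8 * Real.log 2 + 0.5032 := by
  have hsq : Real.sqrt (401/256 : ℝ) ≤ 1.2516 := by
    have h := Real.sqrt_le_sqrt (show (401/256:ℝ) ≤ 1.2516^2 by norm_num)
    rwa [Real.sqrt_sq (by norm_num)] at h
  have h1 : Real.log (401/256 : ℝ) ≤ 0.5032 := by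
    have h0 := log_le_two_sqrt' (show (0:ℝ) < 401/256 by norm_num)
    calc Real.log (401/256 : ℝ) ≤ 2 * (Real.sqrt (401/256:ℝ) - 1) := h0
      _ ≤ 2 * ((1.2516:ℝ) - 1) := by linarith
      _ = 0.5032 := by norm_num
  have h2 : (401:ℝ) = 256 * (401/256) := by norm_num
  rw [h2, Real.log_mul (by norm_num) (by norm_num),
    show (256:ℝ) = 2^8 by norm_num, Real.log_pow]
  push_cast
  linarith

private lemma log2101_le' : Real.log 2101 ≤ 11 * Real.log 2 + 53/2048 := by
  have h1 : Real.log (2101/2048 : ℝ) ≤ 53/2048 := by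
    have h0 := Real.log_le_sub_one_of_pos (show (0:ℝ) < 2101/2048 by norm_num)
    linarith [h0, show (2101/2048:ℝ) - 1 = 53/2048 by norm_num]
  have h2 : (2101:ℝ) = 2048 * (2101/2048) := by norm_num
  rw [h2, Real.log_mul (by norm_num) (by norm_num),
    show (2048:ℝ) = 2^11 by norm_num, Real.log_pow]
  push_cast
  linarith

private lemma binom_gt_cat (m : ℕ) (hm : 1 ≤ m) :
    Real.log ((Nat.centralBinom m : ℝ) / 2) > Real.log ((catalan m : ℝ) / 2) := by
  have hcp : (0:ℝ) < (catalan m : ℝ) := by exact_mod_cast cat_pos' m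
  apply Real.log_lt_log (by positivity)
  have hlt : catalan m < Nat.centralBinom m := by
    have h := succ_mul_catalan_eq_centralBinom m
    have hc := cat_pos' m
    nlinarith [h, hc, hm]
  have : (catalan m : ℝ) < (Nat.centralBinom m : ℝ) := by exact_mod_cast hlt
  linarith

set_option maxHeartbeats 1600000 in
theorem stmt_13 :
    (∀ m : ℕ, 7 ≤ m →
      Real.log ((catalan m : ℝ) / 2) / (m : ℝ) <
        Real.log ((catalan (m + 1) : ℝ) / 2) / ((m : ℝ) + 1)) ∧
    (∀ m : ℕ, 14 ≤ m →
      Real.log ((Nat.centralBinom m : ℝ) / 2) > Real.log ((catalan m : ℝ) / 2) ∧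
        Real.log ((catalan m : ℝ) / 2) > (m : ℝ)) ∧
    (∀ m : ℕ, 400 ≤ m →
      Real.log ((Nat.centralBinom m : ℝ) / 2) > Real.log ((catalan m : ℝ) / 2) ∧
        Real.log ((catalan m : ℝ) / 2) > 1.36 * (m : ℝ)) ∧
    (∀ m : ℕ, 2100 ≤ m →
      Real.log ((Nat.centralBinom m : ℝ) / 2) > Real.log ((catalan m : ℝ) / 2) ∧
        Real.log ((catalan m : ℝ) / 2) > 1.38 * (m : ℝ)) := by
  have l2lo := Real.log_two_gt_d9
  have l2hi := Real.log_two_lt_d9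
  refine ⟨?_, ?_, ?_, ?_⟩
  · -- monotonicity
    intro m hm
    have hmr : (7:ℝ) ≤ (m:ℝ) := by exact_mod_cast hm
    have hcp : (0:ℝ) < (catalan m : ℝ) := by exact_mod_cast cat_pos' m
    have hcp1 : (0:ℝ) < (catalan (m+1) : ℝ) := by exact_mod_cast cat_pos' (m+1)
    -- recurrence: (m+2) C_{m+1} = (4m+2) C_m
    have hnat : (m+2) * catalan (m+1) = (4*m+2) * catalan m := by
      have h1 : (m+1+1) * catalan (m+1) = Nat.centralBinom (m+1) :=
        succ_mul_catalan_eq_centralBinom (m+1)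
      have h2 : (m+1) * Nat.centralBinom (m+1) = 2*(2*m+1) * Nat.centralBinom m :=
        Nat.succ_mul_centralBinom_succ m
      have h3 : (m+1) * catalan m = Nat.centralBinom m :=
        succ_mul_catalan_eq_centralBinom m
      have h4 : Nat.centralBinom (m+1) = 2*(2*m+1) * catalan m := by
        apply Nat.eq_of_mul_eq_mul_left (show 0 < m+1 by omega)
        rw [h2, ← h3]; ring
      rw [show m+2 = m+1+1 by ring, h1, h4]; ring
    have hrel : ((m:ℝ)+2) * (catalan (m+1) : ℝ) = (4*(m:ℝ)+2) * (catalan m : ℝ) := by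
      have h := congrArg (Nat.cast : ℕ → ℝ) hnat
      push_cast at h
      linarith [h]
    have hratio_pos : (0:ℝ) < (4*(m:ℝ)+2)/((m:ℝ)+2) := by positivity
    have hC1 : (catalan (m+1) : ℝ)/2 = ((catalan m : ℝ)/2) * ((4*(m:ℝ)+2)/((m:ℝ)+2)) := by
      field_simp
      linarith [hrel]
    set L := Real.log ((4*(m:ℝ)+2)/((m:ℝ)+2)) with hL
    have hlog : Real.log ((catalan (m+1) : ℝ)/2) = Real.log ((catalan m : ℝ)/2) + L := by
      rw [hC1, Real.log_mul (by positivity) (by positivity)]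
    -- upper bound on log(C_m/2)
    have hub : Real.log ((catalan m : ℝ)/2) ≤ (m:ℝ) * Real.log 4 - Real.log (2*((m:ℝ)+1)) := by
      have hcb : (m+1) * catalan m = Nat.centralBinom m := succ_mul_catalan_eq_centralBinom m
      have hcb4 : (m+1) * catalan m ≤ 4^m := by
        rw [hcb]
        exact le_trans (Nat.choose_le_choose m (show 2*m ≤ 2*m+1 by omega))
          (Nat.choose_middle_le_pow m)
      have hcbr : ((m:ℝ)+1) * (catalan m : ℝ) ≤ (4:ℝ)^m := by
        have := (Nat.cast_le (α := ℝ)).2 hcb4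
        push_cast at this
        linarith [this]
      have hle : (catalan m : ℝ)/2 ≤ (4:ℝ)^m / (2*((m:ℝ)+1)) := by
        rw [div_le_div_iff₀ (by norm_num) (by positivity)]
        nlinarith [hcbr]
      have hR : Real.log ((4:ℝ)^m / (2*((m:ℝ)+1)))
          = (m:ℝ)*Real.log 4 - Real.log (2*((m:ℝ)+1)) := by
        rw [Real.log_div (by positivity) (by positivity), Real.log_pow]
      exact le_trans (Real.log_le_log (by positivity) hle) hR.le
    -- log 4 = L + log(4(m+2)/(4m+2))
    have hsum : Real.log (4*((m:ℝ)+2)/(4*(m:ℝ)+2)) = Real.log 4 - L := by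
      rw [hL, ← Real.log_div (by norm_num) (by positivity)]
      congr 1
      field_simp
    have hsmall : Real.log (4*((m:ℝ)+2)/(4*(m:ℝ)+2)) ≤ 3/(2*(m:ℝ)+1) := by
      have h := Real.log_le_sub_one_of_pos (show (0:ℝ) < 4*((m:ℝ)+2)/(4*(m:ℝ)+2) by positivity)
      have he : 4*((m:ℝ)+2)/(4*(m:ℝ)+2) - 1 = 3/(2*(m:ℝ)+1) := by
        rw [div_sub_one (by positivity), div_eq_div_iff (by positivity) (by positivity)]
        ring
      linarith [h, he.le, he.ge]
    have hD : (m:ℝ) * Real.log (4*((m:ℝ)+2)/(4*(m:ℝ)+2)) ≤ (m:ℝ) * (3/(2*(m:ℝ)+1)) :=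
      mul_le_mul_of_nonneg_left hsmall (by linarith)
    have hE : (m:ℝ) * (3/(2*(m:ℝ)+1)) < 3/2 := by
      rw [mul_div_assoc'] at *
      rw [div_lt_div_iff₀ (by linarith) (by norm_num)]
      ring_nf
      linarith
    have hB2 : Real.log (2*((m:ℝ)+1)) ≥ 4 * Real.log 2 := by
      rw [← log16_eq']
      exact Real.log_le_log (by norm_num) (by linarith)
    have hF : (m:ℝ) * L = (m:ℝ) * Real.log 4 - (m:ℝ) * Real.log (4*((m:ℝ)+2)/(4*(m:ℝ)+2)) := by
      rw [hsum]; ring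
    have hkey : Real.log ((catalan m : ℝ)/2) < (m:ℝ) * L := by
      nlinarith [hub, hB2, hD, hE, hF, l2lo]
    rw [div_lt_div_iff₀ (by linarith) (by linarith), hlog]
    nlinarith [hkey]
  · -- m ≥ 14
    intro m hm
    refine ⟨binom_gt_cat m (by omega), ?_⟩
    rcases Nat.eq_or_lt_of_le hm with h14 | h15
    · -- m = 14 : numeric
      subst h14
      have hcv : catalan 14 = 2674440 := by
        rw [catalan_eq_centralBinom_div]
        norm_num [Nat.centralBinom]
        rfl
      rw [hcv]
      rw [show ((2674440:ℕ):ℝ)/2 = 1337220 by norm_num]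
      rw [gt_iff_lt, Real.lt_log_iff_exp_lt (by norm_num)]
      have h1 : Real.exp (14:ℕ) = Real.exp 1 ^ (14:ℕ) := (Real.exp_one_pow 14).symm
      have h2 : Real.exp 1 ^ (14:ℕ) < 2.7182818286 ^ (14:ℕ) := by
        apply pow_lt_pow_left₀ Real.exp_one_lt_d9 (Real.exp_pos 1).le
        norm_num
      calc Real.exp ((14:ℕ):ℝ) = Real.exp 1 ^ (14:ℕ) := by norm_num [h1]
        _ < 2.7182818286 ^ (14:ℕ) := h2
        _ < 1337220 := by norm_num
    · -- m ≥ 15 : analytic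
      have h := lemD' 1 15 (by norm_num) ?_ ?_ m (by omega)
      · linarith [h]
      · rw [show ((15:ℕ):ℝ)+1 = 16 by norm_num, log16_eq', log4_eq']
        push_cast
        linarith [l2lo, l2hi]
      · rw [log4_eq', show ((15:ℕ):ℝ)+1 = 16 by norm_num]
        linarith [l2lo]
  · -- m ≥ 400
    intro m hm
    refine ⟨binom_gt_cat m (by omega), ?_⟩
    have h := lemD' 1.36 400 (by norm_num) ?_ ?_ m hm
    · linarith [h]
    · rw [show ((400:ℕ):ℝ)+1 = 401 by norm_num, log4_eq']
      push_cast
      linarith [l2lo, l2hi, log401_le']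
    · rw [log4_eq', show ((400:ℕ):ℝ)+1 = 401 by norm_num]
      linarith [l2lo]
  · -- m ≥ 2100
    intro m hm
    refine ⟨binom_gt_cat m (by omega), ?_⟩
    have h := lemD' 1.38 2100 (by norm_num) ?_ ?_ m hm
    · linarith [h]
    · rw [show ((2100:ℕ):ℝ)+1 = 2101 by norm_num, log4_eq']
      push_cast
      linarith [l2lo, l2hi, log2101_le']
    · rw [log4_eq', show ((2100:ℕ):ℝ)+1 = 2101 by norm_num]
      linarith [l2lo]
end
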